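/- Let r, s ∈ ℕ with m := max(r,s) ≥ 1, with indices 1 ≤ λ_1 < ⋯ < λ_s ≤ r when r ≥ s (and λ_j := j, together with 1 ≤ σ_1 < ⋯ < σ_r ≤ s, σ_{r+1} = s+1, when r ≤ s). Let K be a field of characteristic zero and a_1,…,a_r, b_1,…,b_s ∈ K with b_j + q ≠ 0 for every integer q ≥ −1 and every j. Let (α_{k+m})_{k∈ℕ} be the branched-continued-fraction coefficients with a_{r+1} := 1 (as in the r ≥ s formula with a_i^{(k)} = a_i + ⌈(k+1−i)/(r+1)⌉, b_j^{(k)} = b_j + ⌈(k+1−λ_j)/r⌉, or the r ≤ s formula with a_i^{(k)} = a_i + ⌈(k+1−σ_i)/(s+1)⌉, b_j^{(k)} = b_j + ⌈(k+1−j)/s⌉), with α_i := 0 for 0 ≤ i ≤ m−1, and let D : ℕ×ℕ → K be the partial m-Dyck path polynomials with weights α. Then the generalised m-Stieltjes–Rogers polynomials are given explicitly by: for all n, k ∈ ℕ with k ≤ n, D((m+1)n, (m+1)k) = C(n,k) · ∏_{i=1}^{r} (a_i + k)_{n−k} / ∏_{j=1}^{s} (b_j^{(k)} + k)_{n−k},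 where b_j^{(k)} = b_j + ⌈(k+1−λ_j)/m⌉. -/

import Mathlib

open Finset Polynomial

/-- `dyckD m α x y` is the generating polynomial of partial `m`-Dyck paths from `(0,0)` to
`(x,y)`, with rises of weight `1` and `m`-falls from height `i` of weight `α i`. -/
def dyckD {K : Type*} [Field K] (m : ℕ) (α : ℕ → K) : ℕ → ℕ → K
  | 0, 0 => 1
  | 0, _ + 1 => 0
  | x + 1, 0 => α m * dyckD m α x m
  | x + 1, y + 1 => dyckD m α x y + α (y + 1 + m) * dyckD m α x (y + 1 + m)

/-- `a_i^{(k)} = a_i + ⌈(k+1−i)/(r+1)⌉` (case `r ≥ s`). -/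
noncomputable def aShift {K : Type*} [Field K] (r : ℕ) (a : ℕ → K) (k : ℤ) (i : ℕ) : K :=
  a i + ((⌈((k + 1 - (i : ℤ) : ℤ) : ℚ) / ((r : ℚ) + 1)⌉ : ℤ) : K)

/-- `b_j^{(k)} = b_j + ⌈(k+1−λ_j)/r⌉` (case `r ≥ s`). -/
noncomputable def bShift {K : Type*} [Field K] (r : ℕ) (lam : ℕ → ℕ) (b : ℕ → K)
    (k : ℤ) (j : ℕ) : K :=
  b j + ((⌈((k + 1 - (lam j : ℤ) : ℤ) : ℚ) / (r : ℚ)⌉ : ℤ) : K)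

/-- `a_i^{(k)} = a_i + ⌈(k+1−σ_i)/(s+1)⌉` (case `r ≤ s`). -/
noncomputable def aShift' {K : Type*} [Field K] (s : ℕ) (sig : ℕ → ℕ) (a : ℕ → K)
    (k : ℤ) (i : ℕ) : K :=
  a i + ((⌈((k + 1 - (sig i : ℤ) : ℤ) : ℚ) / ((s : ℚ) + 1)⌉ : ℤ) : K)

/-- `b_j^{(k)} = b_j + ⌈(k+1−j)/s⌉` (case `r ≤ s`). -/
noncomputable def bShift' {K : Type*} [Field K] (s : ℕ) (b : ℕ → K) (k : ℤ) (j : ℕ) : K :=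
  b j + ((⌈((k + 1 - (j : ℤ) : ℤ) : ℚ) / (s : ℚ)⌉ : ℤ) : K)

/-- `[k]_n`, the unique element of `{1,…,n}` congruent to `k` modulo `n`. -/
def modIdx (k n : ℕ) : ℕ := ((((k : ℤ) - 1) % (n : ℤ)) + 1).toNat

/-!
Write `P(Y, d) = ∏ᵢ (a_i^{(Y)})_d / (d! ∏ⱼ (b_j^{(Y)})_d)` (`pochQuot` of the `ceilShift`
parameters). Then `D(y + (m+1)d, y) = P(y, d)` for all `y, d`, by induction on the path length,
as soon as `P` satisfies the recursion of `D`: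
`P(y, d+1) = P(y-1, d+1) + α_{y+m} P(y+m, d)`, with `P(-1, d+1) = 0` because
`a_{r+1}^{(-1)} = 0`. Going from `Y = y - 1` to `Y = y` raises by one the (at most one) `a_i` and
the (at most one) `b_j` whose index is congruent to `y`, while going to `Y = y + m` raises every
`a_i^{(y-1)}` and every `b_j^{(y)}` by one. Splitting off one factor of each Pochhammer symbol
therefore turns the recursion into a rational identity in the raised parameters, and the three
formulas for `α` are exactly its solutions in the three possible cases. At `Y = (m+1)k` all
`a_i^{(Y)}` equal `a_i + k`, and the factor `(k+1)_{n-k}` coming from `a_{r+1} = 1` produces the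
binomial coefficient.
-/

section CeilShift

lemma ceil_intCast_add_one_div (t : ℤ) {n : ℕ} (hn : 0 < n) :
    ⌈((t + 1 : ℤ) : ℚ) / n⌉ = ⌈(t : ℚ) / n⌉ + if (n : ℤ) ∣ t then 1 else 0 := by
  have hn' : (0 : ℚ) < n := by exact_mod_cast hn
  split_ifs with hdvd
  · obtain ⟨c, rfl⟩ := hdvd
    have hc : ((n * c : ℤ) : ℚ) / n = c := by push_cast; field_simp
    rw [hc, Int.ceil_intCast, Int.ceil_eq_iff]
    push_cast
    constructor
    · rw [lt_div_iff₀ hn']; nlinarith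
    · rw [div_le_iff₀ hn']
      have : (1 : ℚ) ≤ n := by exact_mod_cast hn
      nlinarith
  · rw [add_zero, Int.ceil_eq_iff]
    have hlt : t < n * ⌈(t : ℚ) / n⌉ := by
      refine lt_of_le_of_ne ?_ fun h => hdvd ⟨_, h⟩
      have := (div_le_iff₀ hn').mp (Int.le_ceil ((t : ℚ) / n))
      exact_mod_cast (by linarith : (t : ℚ) ≤ n * ⌈(t : ℚ) / n⌉)
    have hlt' : ((t + 1 : ℤ) : ℚ) ≤ n * ⌈(t : ℚ) / n⌉ := by exact_mod_cast hlt
    constructor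
    · calc (⌈(t : ℚ) / n⌉ : ℚ) - 1 < t / n := by linarith [Int.ceil_lt_add_one ((t : ℚ) / n)]
        _ ≤ ((t + 1 : ℤ) : ℚ) / n := by gcongr; linarith
    · rw [div_le_iff₀ hn']; linarith

lemma ceil_intCast_add_mul_div (t k : ℤ) {n : ℕ} (hn : n ≠ 0) :
    ⌈((t + n * k : ℤ) : ℚ) / n⌉ = ⌈(t : ℚ) / n⌉ + k := by
  have hn' : (n : ℚ) ≠ 0 := by exact_mod_cast hn
  rw [← Int.ceil_add_intCast]
  congr 1
  push_cast
  field_simp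

variable {K : Type*} [Field K]

/-- The common shape `v + ⌈(Y + 1 - e) / n⌉` of the shifted parameters `a_i^{(Y)}`, `b_j^{(Y)}`. -/
noncomputable def ceilShift (v : K) (e n : ℕ) (Y : ℤ) : K :=
  v + ((⌈((Y + 1 - e : ℤ) : ℚ) / n⌉ : ℤ) : K)

lemma aShift_eq_ceilShift (r : ℕ) (a : ℕ → K) (k : ℤ) (i : ℕ) :
    aShift r a k i = ceilShift (a i) i (r + 1) k := by
  simp [aShift, ceilShift]

lemma bShift_eq_ceilShift (r : ℕ) (lam : ℕ → ℕ) (b : ℕ → K) (k : ℤ) (j : ℕ) :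
    bShift r lam b k j = ceilShift (b j) (lam j) r k := rfl

lemma aShift'_eq_ceilShift (s : ℕ) (sig : ℕ → ℕ) (a : ℕ → K) (k : ℤ) (i : ℕ) :
    aShift' s sig a k i = ceilShift (a i) (sig i) (s + 1) k := by
  simp [aShift', ceilShift]

lemma bShift'_eq_ceilShift (s : ℕ) (b : ℕ → K) (k : ℤ) (j : ℕ) :
    bShift' s b k j = ceilShift (b j) j s k := rfl

variable {v : K} {e n : ℕ}

lemma ceilShift_eq_sub_one_add (hn : 0 < n) (Y : ℤ) :
    ceilShift v e n Y = ceilShift v e n (Y - 1) + if (n : ℤ) ∣ Y - e then 1 else 0 := by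
  have h := ceil_intCast_add_one_div (Y - e) hn
  rw [show Y - e + 1 = Y + 1 - e by ring] at h
  unfold ceilShift
  rw [h, show Y - 1 + 1 - e = Y - e by ring]
  split_ifs <;> push_cast <;> ring

lemma ceilShift_add_mul (hn : n ≠ 0) (Y k : ℤ) :
    ceilShift v e n (Y + n * k) = ceilShift v e n Y + k := by
  unfold ceilShift
  rw [show Y + n * k + 1 - e = Y + 1 - e + n * k by ring, ceil_intCast_add_mul_div _ _ hn]
  push_cast
  ring

lemma ceilShift_zero (he : 1 ≤ e) (hen : e ≤ n) : ceilShift v e n 0 = v := by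
  have hn : (0 : ℚ) < n := by exact_mod_cast he.trans hen
  have hen' : (e : ℚ) ≤ n := by exact_mod_cast hen
  have he' : (1 : ℚ) ≤ e := by exact_mod_cast he
  suffices h : ⌈((0 + 1 - e : ℤ) : ℚ) / n⌉ = 0 by rw [ceilShift, h, Int.cast_zero, add_zero]
  rw [Int.ceil_eq_iff]
  push_cast
  constructor
  · rw [lt_div_iff₀ hn]; linarith
  · exact div_nonpos_of_nonpos_of_nonneg (by linarith) hn.le

lemma ceilShift_self_neg_one (hn : 0 < n) : ceilShift v n n (-1) = v - 1 := by
  have h := ceilShift_eq_sub_one_add (v := v) (e := n) hn 0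
  rw [ceilShift_zero hn le_rfl, zero_sub, zero_sub, if_pos (dvd_neg.mpr dvd_rfl)] at h
  linear_combination -h

lemma ceilShift_add_natCast_ne_zero (hv : ∀ q : ℤ, -1 ≤ q → v + q ≠ 0) (hn : 0 < n)
    (hen : e ≤ n) {Y : ℤ} (hY : -1 ≤ Y) (t : ℕ) : ceilShift v e n Y + t ≠ 0 := by
  have hn' : (0 : ℚ) < n := by exact_mod_cast hn
  have hceil : -1 ≤ ⌈((Y + 1 - e : ℤ) : ℚ) / n⌉ := by
    refine Int.le_ceil_iff.mpr ?_
    rw [lt_div_iff₀ hn']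
    have : (e : ℚ) ≤ n := by exact_mod_cast hen
    have : (-1 : ℚ) ≤ Y := by exact_mod_cast hY
    push_cast
    linarith
  have h := hv (⌈((Y + 1 - e : ℤ) : ℚ) / n⌉ + t) (by omega)
  unfold ceilShift
  push_cast at h ⊢
  rwa [add_assoc]

end CeilShift

section ModIdx

lemma modIdx_mem_Icc (y : ℕ) {n : ℕ} (hn : 0 < n) : modIdx y n ∈ Icc 1 n := by
  have h0 := Int.emod_nonneg ((y : ℤ) - 1) (by omega : (n : ℤ) ≠ 0)
  have h1 := Int.emod_lt_of_pos ((y : ℤ) - 1) (by omega : (0 : ℤ) < n)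
  rw [mem_Icc, modIdx]
  omega

lemma modIdx_eq_iff_dvd (y : ℕ) {e n : ℕ} (he : 1 ≤ e) (hen : e ≤ n) :
    modIdx y n = e ↔ (n : ℤ) ∣ y - e := by
  have h0 := Int.emod_nonneg ((y : ℤ) - 1) (by omega : (n : ℤ) ≠ 0)
  have hmod : ((e : ℤ) - 1) % n = e - 1 := Int.emod_eq_of_lt (by omega) (by omega)
  rw [show (y : ℤ) - e = (y - 1) - (e - 1) by ring, ← Int.modEq_iff_dvd, Int.ModEq, hmod,
    modIdx]
  omega

end ModIdx

section Marks

variable {K ι : Type*} [Field K] {I : Finset ι} {e : ι → ℕ} {n : ℕ}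

lemma ceilShift_bump_of_modIdx_eq [DecidableEq ι] (w : ι → K)
    (he : ∀ i ∈ I, 1 ≤ e i ∧ e i ≤ n) (he_inj : Set.InjOn e I) {y : ℕ} {i₀ : ι} (hi₀ : i₀ ∈ I)
    (hy : modIdx y n = e i₀) (i : ι) (hi : i ∈ I) :
    ceilShift (w i) (e i) n y = ceilShift (w i) (e i) n (y - 1) + if i = i₀ then 1 else 0 := by
  have hn : 0 < n := by linarith [he i hi]
  have hmark : (n : ℤ) ∣ y - e i ↔ i = i₀ := by
    rw [← modIdx_eq_iff_dvd y (he i hi).1 (he i hi).2, hy]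
    exact ⟨fun h => (he_inj hi₀ hi h).symm, fun h => h ▸ rfl⟩
  simp only [ceilShift_eq_sub_one_add hn (e := e i) (y : ℤ), hmark]

lemma ceilShift_eq_sub_one_of_modIdx_ne (w : ι → K) (he : ∀ i ∈ I, 1 ≤ e i ∧ e i ≤ n) {y : ℕ}
    (hy : ∀ i ∈ I, modIdx y n ≠ e i) (i : ι) (hi : i ∈ I) :
    ceilShift (w i) (e i) n y = ceilShift (w i) (e i) n (y - 1) := by
  have hn : 0 < n := by linarith [he i hi]
  have hmark : ¬ (n : ℤ) ∣ y - e i := by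
    rw [← modIdx_eq_iff_dvd y (he i hi).1 (he i hi).2]
    exact hy i hi
  simp only [ceilShift_eq_sub_one_add hn (e := e i) (y : ℤ), hmark, if_false, add_zero]

end Marks

section PochQuot

open Nat

variable {K ι : Type*} [Field K]

lemma eval_ascPochhammer_succ_left (d : ℕ) (x : K) :
    (ascPochhammer K (d + 1)).eval x = x * (ascPochhammer K d).eval (x + 1) := by
  simp [ascPochhammer_succ_left, eval_comp]

lemma eval_ascPochhammer_ne_zero {x : K} (hx : ∀ t : ℕ, x + t ≠ 0) (d : ℕ) :
    (ascPochhammer K d).eval x ≠ 0 := by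
  induction d with
  | zero => simp
  | succ d ih => rw [ascPochhammer_succ_eval]; exact mul_ne_zero ih (hx d)

lemma eval_ascPochhammer_natCast_add_one [CharZero K] (k d : ℕ) :
    (ascPochhammer K d).eval ((k : K) + 1) = ((k + d).choose k : K) * (d ! : K) := by
  have h := factorial_mul_ascPochhammer K k d
  rw [← Nat.add_choose_mul_factorial_mul_factorial k d] at h
  push_cast at h
  rw [← Nat.choose_symm_add] at h
  apply mul_left_cancel₀ (Nat.cast_ne_zero.mpr k.factorial_ne_zero : (k ! : K) ≠ 0)
  rw [h]
  ring

lemma prod_eval_ascPochhammer_succ (I : Finset ι) (x : ι → K) (d : ℕ) :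
    ∏ i ∈ I, (ascPochhammer K (d + 1)).eval (x i)
      = (∏ i ∈ I, x i) * ∏ i ∈ I, (ascPochhammer K d).eval (x i + 1) := by
  simp only [eval_ascPochhammer_succ_left, prod_mul_distrib]

lemma prod_eval_ascPochhammer_add_one_ne_zero {I : Finset ι} {x : ι → K}
    (hx : ∀ i ∈ I, ∀ t : ℕ, x i + t ≠ 0) (d : ℕ) :
    ∏ i ∈ I, (ascPochhammer K d).eval (x i + 1) ≠ 0 :=
  prod_ne_zero_iff.mpr fun i hi =>
    eval_ascPochhammer_ne_zero (fun t => by convert hx i hi (t + 1) using 1; push_cast; ring) d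

variable [DecidableEq ι] {I : Finset ι} {i₀ : ι} {x x' : ι → K}

lemma eq_of_mem_erase_of_bump (hx' : ∀ i ∈ I, x' i = x i + if i = i₀ then 1 else 0) {i : ι}
    (hi : i ∈ I.erase i₀) : x' i = x i := by
  rw [hx' i (mem_of_mem_erase hi), if_neg (ne_of_mem_erase hi), add_zero]

lemma prod_eq_mul_prod_erase_of_bump (hi₀ : i₀ ∈ I)
    (hx' : ∀ i ∈ I, x' i = x i + if i = i₀ then 1 else 0) :
    ∏ i ∈ I, x' i = (x i₀ + 1) * ∏ i ∈ I.erase i₀, x i := by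
  rw [← mul_prod_erase I x' hi₀, hx' i₀ hi₀, if_pos rfl,
    prod_congr rfl fun i hi => eq_of_mem_erase_of_bump hx' hi]

lemma add_natCast_ne_zero_of_bump (hx' : ∀ i ∈ I, x' i = x i + if i = i₀ then 1 else 0)
    (hx : ∀ i ∈ I, ∀ t : ℕ, x i + t ≠ 0) : ∀ i ∈ I, ∀ t : ℕ, x' i + t ≠ 0 := fun i hi t => by
  rw [hx' i hi]
  split_ifs
  · convert hx i hi (t + 1) using 1; push_cast; ring
  · simpa using hx i hi t

lemma prod_eval_ascPochhammer_succ_of_bump (hi₀ : i₀ ∈ I)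
    (hx' : ∀ i ∈ I, x' i = x i + if i = i₀ then 1 else 0) (d : ℕ) :
    ∏ i ∈ I, (ascPochhammer K (d + 1)).eval (x' i)
      = (x i₀ + 1 + d) * (∏ i ∈ I.erase i₀, x i)
        * ∏ i ∈ I, (ascPochhammer K d).eval (x i + 1) := by
  rw [← mul_prod_erase I _ hi₀,
    ← mul_prod_erase I (fun i => (ascPochhammer K d).eval (x i + 1)) hi₀,
    prod_congr rfl fun i hi => by rw [eq_of_mem_erase_of_bump hx' hi], prod_eval_ascPochhammer_succ,
    hx' i₀ hi₀, if_pos rfl, ascPochhammer_succ_eval]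
  ring

lemma prod_eval_ascPochhammer_succ_mul_of_bump (hi₀ : i₀ ∈ I)
    (hx' : ∀ i ∈ I, x' i = x i + if i = i₀ then 1 else 0) (d : ℕ) :
    (∏ i ∈ I, (ascPochhammer K (d + 1)).eval (x i)) * (x i₀ + 1 + d)
      = x i₀ * (x i₀ + 1) * (∏ i ∈ I.erase i₀, x i)
        * ∏ i ∈ I, (ascPochhammer K d).eval (x' i + 1) := by
  have hpair : (ascPochhammer K d).eval (x i₀ + 1) * (x i₀ + 1 + d)
      = (x i₀ + 1) * (ascPochhammer K d).eval (x' i₀ + 1) := by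
    rw [hx' i₀ hi₀, if_pos rfl, ← ascPochhammer_succ_eval, eval_ascPochhammer_succ_left]
  have hrest : ∏ i ∈ I.erase i₀, (ascPochhammer K d).eval (x' i + 1)
      = ∏ i ∈ I.erase i₀, (ascPochhammer K d).eval (x i + 1) := prod_congr rfl fun i hi => by
    rw [eq_of_mem_erase_of_bump hx' hi]
  rw [prod_eval_ascPochhammer_succ, ← mul_prod_erase I x hi₀,
    ← mul_prod_erase I (fun i => (ascPochhammer K d).eval (x i + 1)) hi₀,
    ← mul_prod_erase I (fun i => (ascPochhammer K d).eval (x' i + 1)) hi₀, hrest]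
  linear_combination (x i₀ * (∏ i ∈ I.erase i₀, x i) * ∏ i ∈ I.erase i₀,
    (ascPochhammer K d).eval (x i + 1)) * hpair

end PochQuot

section PochQuotStep

open Nat

variable {K ι κ : Type*} [Field K]

noncomputable def pochQuot (I : Finset ι) (J : Finset κ) (x : ι → K) (z : κ → K) (d : ℕ) : K :=
  (∏ i ∈ I, (ascPochhammer K d).eval (x i)) / ((d ! : K) * ∏ j ∈ J, (ascPochhammer K d).eval (z j))

lemma pochQuot_zero (I : Finset ι) (J : Finset κ) (x : ι → K) (z : κ → K) :
    pochQuot I J x z 0 = 1 := by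
  simp [pochQuot]

lemma pochQuot_succ_eq_zero_of_mem {I : Finset ι} {J : Finset κ} {x : ι → K} {z : κ → K} {i : ι}
    (hi : i ∈ I) (hx : x i = 0) (d : ℕ) : pochQuot I J x z (d + 1) = 0 := by
  rw [pochQuot, prod_eq_zero hi (by rw [hx, eval_ascPochhammer_succ_left, zero_mul]), zero_div]

variable [CharZero K] [DecidableEq ι] [DecidableEq κ] {I : Finset ι} {J : Finset κ}
  {i₀ : ι} {j₀ : κ} {x x' : ι → K} {z z' : κ → K}

theorem pochQuot_succ_of_bump_bump (hi₀ : i₀ ∈ I) (hj₀ : j₀ ∈ J)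
    (hx' : ∀ i ∈ I, x' i = x i + if i = i₀ then 1 else 0)
    (hz' : ∀ j ∈ J, z' j = z j + if j = j₀ then 1 else 0)
    (hz : ∀ j ∈ J, ∀ t : ℕ, z j + t ≠ 0) (d : ℕ) :
    pochQuot I J x' z' (d + 1) = pochQuot I J x z (d + 1)
      + (z' j₀ - x' i₀) * (∏ i ∈ I.erase i₀, x' i) / ((z' j₀ - 1) * ∏ j ∈ J, z' j)
        * pochQuot I J (fun i => x i + 1) (fun j => z' j + 1) d := by
  have hx'₀ : x' i₀ = x i₀ + 1 := by simpa using hx' i₀ hi₀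
  have hz'₀ : z' j₀ = z j₀ + 1 := by simpa using hz' j₀ hj₀
  have hX : ∏ i ∈ I.erase i₀, x' i = ∏ i ∈ I.erase i₀, x i :=
    prod_congr rfl fun i hi => eq_of_mem_erase_of_bump hx' hi
  have hc : z j₀ ≠ 0 := by simpa using hz j₀ hj₀ 0
  have hc₁ : z j₀ + 1 ≠ 0 := by simpa using hz j₀ hj₀ 1
  have hcd : z j₀ + 1 + d ≠ 0 := by simpa [add_assoc] using hz j₀ hj₀ (1 + d)
  have hZ₀ : ∏ j ∈ J.erase j₀, z j ≠ 0 :=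
    prod_ne_zero_iff.mpr fun j hj => by simpa using hz j (mem_of_mem_erase hj) 0
  have hD := prod_eval_ascPochhammer_add_one_ne_zero (add_natCast_ne_zero_of_bump hz' hz) d
  have hfact : (d ! : K) ≠ 0 := Nat.cast_ne_zero.mpr d.factorial_ne_zero
  have hd₁ : (d : K) + 1 ≠ 0 := by exact_mod_cast d.succ_ne_zero
  have hden := eq_div_of_mul_eq hcd (prod_eval_ascPochhammer_succ_mul_of_bump hj₀ hz' d)
  unfold pochQuot
  rw [prod_eval_ascPochhammer_succ_of_bump hi₀ hx', prod_eval_ascPochhammer_succ I x,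
    ← mul_prod_erase I x hi₀, prod_eval_ascPochhammer_succ J z', hden,
    prod_eq_mul_prod_erase_of_bump hj₀ hz', hX, hx'₀, hz'₀,
    add_sub_cancel_right, factorial_succ]
  push_cast
  field_simp
  ring

omit [DecidableEq κ] in
theorem pochQuot_succ_of_bump_num (hi₀ : i₀ ∈ I)
    (hx' : ∀ i ∈ I, x' i = x i + if i = i₀ then 1 else 0) (hz' : ∀ j ∈ J, z' j = z j)
    (hz : ∀ j ∈ J, ∀ t : ℕ, z j + t ≠ 0) (d : ℕ) :
    pochQuot I J x' z' (d + 1) = pochQuot I J x z (d + 1)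
      + (∏ i ∈ I.erase i₀, x' i) / (∏ j ∈ J, z' j)
        * pochQuot I J (fun i => x i + 1) (fun j => z' j + 1) d := by
  have hzz' : pochQuot I J x z (d + 1) = pochQuot I J x z' (d + 1) := by
    unfold pochQuot
    congr 2
    exact prod_congr rfl fun j hj => by rw [hz' j hj]
  replace hz : ∀ j ∈ J, ∀ t : ℕ, z' j + t ≠ 0 := fun j hj => hz' j hj ▸ hz j hj
  have hX : ∏ i ∈ I.erase i₀, x' i = ∏ i ∈ I.erase i₀, x i :=
    prod_congr rfl fun i hi => eq_of_mem_erase_of_bump hx' hi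
  have hZ : ∏ j ∈ J, z' j ≠ 0 := prod_ne_zero_iff.mpr fun j hj => by simpa using hz j hj 0
  have hD := prod_eval_ascPochhammer_add_one_ne_zero hz d
  have hfact : (d ! : K) ≠ 0 := Nat.cast_ne_zero.mpr d.factorial_ne_zero
  have hd₁ : (d : K) + 1 ≠ 0 := by exact_mod_cast d.succ_ne_zero
  unfold pochQuot at hzz' ⊢
  rw [hzz', prod_eval_ascPochhammer_succ_of_bump hi₀ hx', prod_eval_ascPochhammer_succ I x,
    ← mul_prod_erase I x hi₀, prod_eval_ascPochhammer_succ J z', hX, factorial_succ]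
  push_cast
  field_simp
  ring

omit [DecidableEq ι] in
theorem pochQuot_succ_of_bump_den (hj₀ : j₀ ∈ J) (hx' : ∀ i ∈ I, x' i = x i)
    (hz' : ∀ j ∈ J, z' j = z j + if j = j₀ then 1 else 0)
    (hz : ∀ j ∈ J, ∀ t : ℕ, z j + t ≠ 0) (d : ℕ) :
    pochQuot I J x' z' (d + 1) = pochQuot I J x z (d + 1)
      + -(∏ i ∈ I, x' i) / ((z' j₀ - 1) * ∏ j ∈ J, z' j)
        * pochQuot I J (fun i => x i + 1) (fun j => z' j + 1) d := by
  have hz'₀ : z' j₀ = z j₀ + 1 := by simpa using hz' j₀ hj₀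
  have hc : z j₀ ≠ 0 := by simpa using hz j₀ hj₀ 0
  have hc₁ : z j₀ + 1 ≠ 0 := by simpa using hz j₀ hj₀ 1
  have hcd : z j₀ + 1 + d ≠ 0 := by simpa [add_assoc] using hz j₀ hj₀ (1 + d)
  have hZ₀ : ∏ j ∈ J.erase j₀, z j ≠ 0 :=
    prod_ne_zero_iff.mpr fun j hj => by simpa using hz j (mem_of_mem_erase hj) 0
  have hD := prod_eval_ascPochhammer_add_one_ne_zero (add_natCast_ne_zero_of_bump hz' hz) d
  have hfact : (d ! : K) ≠ 0 := Nat.cast_ne_zero.mpr d.factorial_ne_zero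
  have hd₁ : (d : K) + 1 ≠ 0 := by exact_mod_cast d.succ_ne_zero
  have hden := eq_div_of_mul_eq hcd (prod_eval_ascPochhammer_succ_mul_of_bump hj₀ hz' d)
  have hN : ∏ i ∈ I, (ascPochhammer K (d + 1)).eval (x' i)
      = ∏ i ∈ I, (ascPochhammer K (d + 1)).eval (x i) := prod_congr rfl fun i hi => by rw [hx' i hi]
  unfold pochQuot
  rw [hN, prod_congr rfl hx', prod_eval_ascPochhammer_succ I x, prod_eval_ascPochhammer_succ J z',
    hden, prod_eq_mul_prod_erase_of_bump hj₀ hz', hz'₀, add_sub_cancel_right, factorial_succ]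
  push_cast
  field_simp
  ring

end PochQuotStep

section Dyck

variable {K : Type*} [Field K] {m : ℕ} {α : ℕ → K}

lemma dyckD_eq_zero_of_lt : ∀ {x y : ℕ}, x < y → dyckD m α x y = 0
  | 0, _ + 1, _ => rfl
  | _ + 1, _ + 1, h => by
    rw [dyckD, dyckD_eq_zero_of_lt (by omega), dyckD_eq_zero_of_lt (by omega), mul_zero, add_zero]

theorem dyckD_eq_of_recurrence (P : ℤ → ℕ → K) (h0 : ∀ y, P y 0 = 1)
    (hneg : ∀ d, P (-1) (d + 1) = 0)
    (hrec : ∀ y d : ℕ, P y (d + 1) = P (y - 1) (d + 1) + α (y + m) * P (y + m) d) (y d : ℕ) :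
    dyckD m α (y + (m + 1) * d) y = P y d := by
  suffices h : ∀ x y d, x = y + (m + 1) * d → dyckD m α x y = P y d from h _ y d rfl
  intro x
  induction x with
  | zero =>
    intro y d h
    obtain ⟨rfl, rfl⟩ : y = 0 ∧ d = 0 := by constructor <;> nlinarith
    simp [dyckD, h0]
  | succ x ih =>
    rintro (_ | z) (_ | e) h
    · omega
    · have := hrec 0 e
      simp only [Nat.cast_zero, zero_sub, hneg, zero_add] at this
      rw [dyckD, ih m e (by linarith), Nat.cast_zero, this]
    · rw [dyckD, ih z 0 (by linarith), dyckD_eq_zero_of_lt (by omega), h0, h0]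
      ring
    · have hrec' := hrec (z + 1) e
      push_cast at hrec'
      rw [add_sub_cancel_right] at hrec'
      rw [dyckD, ih z (e + 1) (by linarith), ih (z + 1 + m) e (by linarith)]
      push_cast
      rw [hrec']

end Dyck

section BranchedContinuedFraction

variable {K ι κ : Type*} [Field K] [CharZero K] [DecidableEq ι] [DecidableEq κ] {m : ℕ}
  {I : Finset ι} {J : Finset κ} {eA : ι → ℕ} {eB : κ → ℕ} {u : ι → K} {v : κ → K} {α : ℕ → K}

-- A parameter `a_i` (resp. `b_j`) is raised between rows `y - 1` and `y` iff `y ≡ eA i [MOD m+1]`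
-- (resp. `y ≡ eB j [MOD m]`); `hαAB`, `hαA`, `hαB` give `α` when both kinds, only an `a_i`, or
-- only a `b_j` are raised.
variable (hm : 0 < m) (heA : ∀ i ∈ I, 1 ≤ eA i ∧ eA i ≤ m + 1) (heA_inj : Set.InjOn eA I)
  (heB : ∀ j ∈ J, 1 ≤ eB j ∧ eB j ≤ m) (heB_inj : Set.InjOn eB J)
  (hv : ∀ j ∈ J, ∀ q : ℤ, -1 ≤ q → v j + q ≠ 0)
  (hmark : ∀ k : ℕ, (∃ i ∈ I, modIdx k (m + 1) = eA i) ∨ (∃ j ∈ J, modIdx k m = eB j))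
  (hαAB : ∀ k : ℕ, ∀ i ∈ I, ∀ j ∈ J, modIdx k (m + 1) = eA i → modIdx k m = eB j →
    α (k + m) = (ceilShift (v j) (eB j) m k - ceilShift (u i) (eA i) (m + 1) k)
      * (∏ i' ∈ I.erase i, ceilShift (u i') (eA i') (m + 1) k)
      / ((ceilShift (v j) (eB j) m k - 1) * ∏ j' ∈ J, ceilShift (v j') (eB j') m k))
  (hαA : ∀ k : ℕ, ∀ i ∈ I, modIdx k (m + 1) = eA i → (∀ j ∈ J, modIdx k m ≠ eB j) →
    α (k + m) = (∏ i' ∈ I.erase i, ceilShift (u i') (eA i') (m + 1) k)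
      / ∏ j' ∈ J, ceilShift (v j') (eB j') m k)
  (hαB : ∀ k : ℕ, ∀ j ∈ J, modIdx k m = eB j → (∀ i ∈ I, modIdx k (m + 1) ≠ eA i) →
    α (k + m) = -(∏ i' ∈ I, ceilShift (u i') (eA i') (m + 1) k)
      / ((ceilShift (v j) (eB j) m k - 1) * ∏ j' ∈ J, ceilShift (v j') (eB j') m k))
include hm heA heA_inj heB heB_inj hv hmark hαAB hαA hαB

theorem pochQuot_ceilShift_succ (y d : ℕ) :
    pochQuot I J (fun i => ceilShift (u i) (eA i) (m + 1) y)
        (fun j => ceilShift (v j) (eB j) m y) (d + 1)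
      = pochQuot I J (fun i => ceilShift (u i) (eA i) (m + 1) (y - 1))
          (fun j => ceilShift (v j) (eB j) m (y - 1)) (d + 1)
        + α (y + m) * pochQuot I J (fun i => ceilShift (u i) (eA i) (m + 1) (y + m))
          (fun j => ceilShift (v j) (eB j) m (y + m)) d := by
  have hA : ∀ i, ceilShift (u i) (eA i) (m + 1) (y + m)
      = ceilShift (u i) (eA i) (m + 1) (y - 1) + 1 := fun i => by
    rw [show (y + m : ℤ) = y - 1 + (m + 1 : ℕ) * 1 by push_cast; ring,
      ceilShift_add_mul m.succ_ne_zero, Int.cast_one]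
  have hB : ∀ j, ceilShift (v j) (eB j) m (y + m) = ceilShift (v j) (eB j) m y + 1 := fun j => by
    rw [← mul_one (m : ℤ), ceilShift_add_mul hm.ne', Int.cast_one]
  have hz : ∀ j ∈ J, ∀ t : ℕ, ceilShift (v j) (eB j) m (y - 1) + t ≠ 0 := fun j hj =>
    ceilShift_add_natCast_ne_zero (hv j hj) hm (heB j hj).2 (by omega)
  simp only [hA, hB]
  by_cases hAm : ∃ i₀ ∈ I, modIdx y (m + 1) = eA i₀ <;>
    by_cases hBm : ∃ j₀ ∈ J, modIdx y m = eB j₀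
  · obtain ⟨i₀, hi₀, hyA⟩ := hAm
    obtain ⟨j₀, hj₀, hyB⟩ := hBm
    rw [pochQuot_succ_of_bump_bump hi₀ hj₀ (ceilShift_bump_of_modIdx_eq u heA heA_inj hi₀ hyA)
      (ceilShift_bump_of_modIdx_eq v heB heB_inj hj₀ hyB) hz, hαAB y i₀ hi₀ j₀ hj₀ hyA hyB]
  · obtain ⟨i₀, hi₀, hyA⟩ := hAm
    push Not at hBm
    rw [pochQuot_succ_of_bump_num hi₀ (ceilShift_bump_of_modIdx_eq u heA heA_inj hi₀ hyA)
      (ceilShift_eq_sub_one_of_modIdx_ne v heB hBm) hz, hαA y i₀ hi₀ hyA hBm]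
  · obtain ⟨j₀, hj₀, hyB⟩ := hBm
    push Not at hAm
    rw [pochQuot_succ_of_bump_den hj₀ (ceilShift_eq_sub_one_of_modIdx_ne u heA hAm)
      (ceilShift_bump_of_modIdx_eq v heB heB_inj hj₀ hyB) hz, hαB y j₀ hj₀ hyB hAm]
  · exact ((hmark y).elim hAm hBm).elim

variable {itop : ι} (hitop : itop ∈ I) (heA_top : eA itop = m + 1) (hu_top : u itop = 1)
include hitop heA_top hu_top

theorem dyckD_eq_pochQuot_ceilShift (y d : ℕ) :
    dyckD m α (y + (m + 1) * d) y
      = pochQuot I J (fun i => ceilShift (u i) (eA i) (m + 1) y)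
          (fun j => ceilShift (v j) (eB j) m y) d := by
  refine dyckD_eq_of_recurrence (fun Y d => pochQuot I J (fun i => ceilShift (u i) (eA i) (m + 1) Y)
    (fun j => ceilShift (v j) (eB j) m Y) d) (fun _ => pochQuot_zero ..) (fun d => ?_)
    (pochQuot_ceilShift_succ hm heA heA_inj heB heB_inj hv hmark hαAB hαA hαB) y d
  refine pochQuot_succ_eq_zero_of_mem hitop ?_ d
  rw [heA_top, ceilShift_self_neg_one m.succ_pos, hu_top, sub_self]

theorem dyckD_succ_mul_eq (n k : ℕ) (hkn : k ≤ n) :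
    dyckD m α ((m + 1) * n) ((m + 1) * k)
      = (n.choose k : K) * (∏ i ∈ I.erase itop, (ascPochhammer K (n - k)).eval (u i + k))
        / ∏ j ∈ J, (ascPochhammer K (n - k)).eval
          (v j + ((⌈((k + 1 - eB j : ℤ) : ℚ) / m⌉ : ℤ) : K) + k) := by
  obtain ⟨d, rfl⟩ := Nat.exists_eq_add_of_le hkn
  have hA : ∀ i ∈ I, ceilShift (u i) (eA i) (m + 1) ((m + 1) * k : ℕ) = u i + k := fun i hi => by
    rw [show (((m + 1) * k : ℕ) : ℤ) = 0 + (m + 1 : ℕ) * k by push_cast; ring,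
      ceilShift_add_mul m.succ_ne_zero, ceilShift_zero (heA i hi).1 (heA i hi).2, Int.cast_natCast]
  have hB : ∀ j, ceilShift (v j) (eB j) m ((m + 1) * k : ℕ)
      = v j + ((⌈((k + 1 - eB j : ℤ) : ℚ) / m⌉ : ℤ) : K) + k := fun j => by
    rw [show (((m + 1) * k : ℕ) : ℤ) = k + m * k by push_cast; ring,
      ceilShift_add_mul hm.ne', ceilShift, Int.cast_natCast]
  rw [mul_add, dyckD_eq_pochQuot_ceilShift hm heA heA_inj heB heB_inj hv hmark hαAB hαA hαB
    hitop heA_top hu_top, pochQuot, prod_congr rfl fun i hi => by rw [hA i hi]]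
  simp only [hB]
  rw [← mul_prod_erase I _ hitop, hu_top, add_comm (1 : K), eval_ascPochhammer_natCast_add_one,
    Nat.add_sub_cancel_left]
  have hfact : (d.factorial : K) ≠ 0 := Nat.cast_ne_zero.mpr d.factorial_ne_zero
  field_simp

end BranchedContinuedFraction

lemma prod_Icc_erase_succ_ite {K M : Type*} [One K] [CommMonoid M] (r : ℕ) (a : ℕ → K)
    (f : K → M) :
    ∏ i ∈ (Icc 1 (r + 1)).erase (r + 1), f (if i = r + 1 then 1 else a i)
      = ∏ i ∈ Icc 1 r, f (a i) := by
  have hI : (Icc 1 (r + 1)).erase (r + 1) = Icc 1 r := by ext; simp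
  exact hI ▸ prod_congr rfl fun i hi => by rw [if_neg (by simp at hi; omega)]

section Cases

variable {K : Type*} [Field K] [CharZero K]

theorem dyckD_succ_mul_eq_of_lam {r s : ℕ} (hr : 1 ≤ r) {lam : ℕ → ℕ} {a b α : ℕ → K}
    (hb : ∀ j, 1 ≤ j → j ≤ s → ∀ q : ℤ, -1 ≤ q → b j + (q : K) ≠ 0)
    (hlam : ∀ j, 1 ≤ j → j ≤ s → 1 ≤ lam j ∧ lam j ≤ r)
    (hlam_mono : ∀ j j', 1 ≤ j → j < j' → j' ≤ s → lam j < lam j')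
    (hgen : ∀ k : ℕ, (∀ ℓ, 1 ≤ ℓ → ℓ ≤ s → modIdx k r ≠ lam ℓ) →
      α (k + r) =
        (∏ i ∈ (Icc 1 (r + 1)).erase (modIdx k (r + 1)),
            aShift r (fun i => if i = r + 1 then 1 else a i) (k : ℤ) i) /
          ∏ j ∈ Icc 1 s, bShift r lam b (k : ℤ) j)
    (hspec : ∀ k ℓ, 1 ≤ ℓ → ℓ ≤ s → modIdx k r = lam ℓ →
      α (k + r) =
        ((bShift r lam b (k : ℤ) ℓ -
            aShift r (fun i => if i = r + 1 then 1 else a i) (k : ℤ) (modIdx k (r + 1))) *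
            ∏ i ∈ (Icc 1 (r + 1)).erase (modIdx k (r + 1)),
              aShift r (fun i => if i = r + 1 then 1 else a i) (k : ℤ) i) /
          ((bShift r lam b (k : ℤ) ℓ - 1) * ∏ j ∈ Icc 1 s, bShift r lam b (k : ℤ) j))
    (n k : ℕ) (hkn : k ≤ n) :
    dyckD r α ((r + 1) * n) ((r + 1) * k)
      = (n.choose k : K) * (∏ i ∈ Icc 1 r, (ascPochhammer K (n - k)).eval (a i + (k : K)))
        / ∏ j ∈ Icc 1 s, (ascPochhammer K (n - k)).eval
          (b j + ((⌈(((k : ℤ) + 1 - (lam j : ℤ) : ℤ) : ℚ) / (r : ℚ)⌉ : ℤ) : K) + (k : K)) := by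
  have hlam_inj : Set.InjOn lam (Icc 1 s) := StrictMonoOn.injOn fun j hj j' hj' h =>
    hlam_mono j j' (mem_Icc.mp hj).1 h (mem_Icc.mp hj').2
  rw [dyckD_succ_mul_eq (I := Icc 1 (r + 1)) (J := Icc 1 s) (eA := fun i => i) (eB := lam)
    (u := fun i => if i = r + 1 then 1 else a i) (itop := r + 1) hr (fun i hi => mem_Icc.mp hi)
    (fun _ _ _ _ h => h) (fun j hj => hlam j (mem_Icc.mp hj).1 (mem_Icc.mp hj).2) hlam_inj
    (fun j hj => hb j (mem_Icc.mp hj).1 (mem_Icc.mp hj).2)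
    (fun k => Or.inl ⟨_, modIdx_mem_Icc k (by omega), rfl⟩) ?_ ?_ ?_ (by simp) rfl (by simp)
    n k hkn,
    prod_Icc_erase_succ_ite r a fun c => (ascPochhammer K (n - k)).eval (c + k)]
  · rintro k i - j hj rfl hkj
    rw [hspec k j (mem_Icc.mp hj).1 (mem_Icc.mp hj).2 hkj]
    simp only [aShift_eq_ceilShift, bShift_eq_ceilShift]
  · rintro k i - rfl hno
    rw [hgen k fun ℓ h₁ h₂ => hno ℓ (mem_Icc.mpr ⟨h₁, h₂⟩)]
    simp only [aShift_eq_ceilShift, bShift_eq_ceilShift]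
  · exact fun k _ _ _ hno => absurd rfl (hno _ (modIdx_mem_Icc k (by omega)))

theorem dyckD_succ_mul_eq_of_sig {r s : ℕ} (hs : 1 ≤ s) {lam sig : ℕ → ℕ} {a b α : ℕ → K}
    (hb : ∀ j, 1 ≤ j → j ≤ s → ∀ q : ℤ, -1 ≤ q → b j + (q : K) ≠ 0)
    (hlam : ∀ j, 1 ≤ j → j ≤ s → lam j = j)
    (hsig : ∀ i, 1 ≤ i → i ≤ r → 1 ≤ sig i ∧ sig i ≤ s)
    (hsig_mono : ∀ i i', 1 ≤ i → i < i' → i' ≤ r → sig i < sig i')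
    (hsig_top : sig (r + 1) = s + 1)
    (hgen : ∀ k : ℕ, (∀ ℓ, 1 ≤ ℓ → ℓ ≤ r + 1 → modIdx k (s + 1) ≠ sig ℓ) →
      α (k + s) =
        -(∏ i ∈ Icc 1 (r + 1), aShift' s sig (fun i => if i = r + 1 then 1 else a i) (k : ℤ) i) /
          ((bShift' s b (k : ℤ) (modIdx k s) - 1) * ∏ j ∈ Icc 1 s, bShift' s b (k : ℤ) j))
    (hspec : ∀ k ℓ, 1 ≤ ℓ → ℓ ≤ r + 1 → modIdx k (s + 1) = sig ℓ →
      α (k + s) =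
        ((bShift' s b (k : ℤ) (modIdx k s) -
            aShift' s sig (fun i => if i = r + 1 then 1 else a i) (k : ℤ) ℓ) *
            ∏ i ∈ (Icc 1 (r + 1)).erase ℓ,
              aShift' s sig (fun i => if i = r + 1 then 1 else a i) (k : ℤ) i) /
          ((bShift' s b (k : ℤ) (modIdx k s) - 1) * ∏ j ∈ Icc 1 s, bShift' s b (k : ℤ) j))
    (n k : ℕ) (hkn : k ≤ n) :
    dyckD s α ((s + 1) * n) ((s + 1) * k)
      = (n.choose k : K) * (∏ i ∈ Icc 1 r, (ascPochhammer K (n - k)).eval (a i + (k : K)))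
        / ∏ j ∈ Icc 1 s, (ascPochhammer K (n - k)).eval
          (b j + ((⌈(((k : ℤ) + 1 - (lam j : ℤ) : ℤ) : ℚ) / (s : ℚ)⌉ : ℤ) : K) + (k : K)) := by
  have hsig' : ∀ i ∈ Icc 1 (r + 1), 1 ≤ sig i ∧ sig i ≤ s + 1 := fun i hi => by
    obtain ⟨h₁, h₂⟩ := mem_Icc.mp hi
    rcases h₂.lt_or_eq with h₂ | rfl
    · exact (hsig i h₁ (by omega)).imp_right (by omega)
    · omega
  have hsig_inj : Set.InjOn sig (Icc 1 (r + 1)) := StrictMonoOn.injOn fun i hi i' hi' h => by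
    obtain ⟨h₁, -⟩ := mem_Icc.mp hi
    obtain ⟨-, h₂⟩ := mem_Icc.mp hi'
    rcases h₂.lt_or_eq with h₂ | rfl
    · exact hsig_mono i i' h₁ h (by omega)
    · have := hsig i h₁ (by omega); omega
  rw [dyckD_succ_mul_eq (I := Icc 1 (r + 1)) (J := Icc 1 s) (eA := sig) (eB := fun j => j)
    (u := fun i => if i = r + 1 then 1 else a i) (itop := r + 1) hs hsig' hsig_inj
    (fun j hj => mem_Icc.mp hj) (fun _ _ _ _ h => h)
    (fun j hj => hb j (mem_Icc.mp hj).1 (mem_Icc.mp hj).2)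
    (fun k => Or.inr ⟨_, modIdx_mem_Icc k hs, rfl⟩) ?_ ?_ ?_ (by simp) hsig_top (by simp) n k hkn,
    prod_Icc_erase_succ_ite r a fun c => (ascPochhammer K (n - k)).eval (c + k)]
  · refine congrArg _ (prod_congr rfl fun j hj => ?_)
    rw [hlam j (mem_Icc.mp hj).1 (mem_Icc.mp hj).2]
  · rintro k i hi j - hki rfl
    rw [hspec k i (mem_Icc.mp hi).1 (mem_Icc.mp hi).2 hki]
    simp only [aShift'_eq_ceilShift, bShift'_eq_ceilShift]
  · exact fun k _ _ _ hno => absurd rfl (hno _ (modIdx_mem_Icc k hs))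
  · rintro k j - rfl hno
    rw [hgen k fun ℓ h₁ h₂ => hno ℓ (mem_Icc.mpr ⟨h₁, h₂⟩)]
    simp only [aShift'_eq_ceilShift, bShift'_eq_ceilShift]

end Cases

theorem stmt16_general {K : Type*} [Field K] [CharZero K]
    (r s : ℕ) (hm : 1 ≤ max r s)
    (lam sig : ℕ → ℕ) (a b : ℕ → K)
    (hb : ∀ j, 1 ≤ j → j ≤ s → ∀ q : ℤ, -1 ≤ q → b j + (q : K) ≠ 0)
    (α : ℕ → K)
    (hcase :
      (s ≤ r ∧
        (∀ j, 1 ≤ j → j ≤ s → 1 ≤ lam j ∧ lam j ≤ r) ∧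
        (∀ j j', 1 ≤ j → j < j' → j' ≤ s → lam j < lam j') ∧
        (∀ k : ℕ, (∀ ℓ, 1 ≤ ℓ → ℓ ≤ s → modIdx k r ≠ lam ℓ) →
          α (k + r) =
            (∏ i ∈ (Finset.Icc 1 (r + 1)).erase (modIdx k (r + 1)),
                aShift r (fun i => if i = r + 1 then 1 else a i) (k : ℤ) i) /
              ∏ j ∈ Finset.Icc 1 s, bShift r lam b (k : ℤ) j) ∧
        (∀ k ℓ, 1 ≤ ℓ → ℓ ≤ s → modIdx k r = lam ℓ →
          α (k + r) =
            ((bShift r lam b (k : ℤ) ℓ -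
                aShift r (fun i => if i = r + 1 then 1 else a i) (k : ℤ) (modIdx k (r + 1))) *
                ∏ i ∈ (Finset.Icc 1 (r + 1)).erase (modIdx k (r + 1)),
                  aShift r (fun i => if i = r + 1 then 1 else a i) (k : ℤ) i) /
              ((bShift r lam b (k : ℤ) ℓ - 1) *
                ∏ j ∈ Finset.Icc 1 s, bShift r lam b (k : ℤ) j))) ∨
      (r ≤ s ∧
        (∀ j, 1 ≤ j → j ≤ s → lam j = j) ∧
        (∀ i, 1 ≤ i → i ≤ r → 1 ≤ sig i ∧ sig i ≤ s) ∧
        (∀ i i', 1 ≤ i → i < i' → i' ≤ r → sig i < sig i') ∧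
        sig (r + 1) = s + 1 ∧
        (∀ k : ℕ, (∀ ℓ, 1 ≤ ℓ → ℓ ≤ r + 1 → modIdx k (s + 1) ≠ sig ℓ) →
          α (k + s) =
            -(∏ i ∈ Finset.Icc 1 (r + 1),
                aShift' s sig (fun i => if i = r + 1 then 1 else a i) (k : ℤ) i) /
              ((bShift' s b (k : ℤ) (modIdx k s) - 1) *
                ∏ j ∈ Finset.Icc 1 s, bShift' s b (k : ℤ) j)) ∧
        (∀ k ℓ, 1 ≤ ℓ → ℓ ≤ r + 1 → modIdx k (s + 1) = sig ℓ →
          α (k + s) =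
            ((bShift' s b (k : ℤ) (modIdx k s) -
                aShift' s sig (fun i => if i = r + 1 then 1 else a i) (k : ℤ) ℓ) *
                ∏ i ∈ (Finset.Icc 1 (r + 1)).erase ℓ,
                  aShift' s sig (fun i => if i = r + 1 then 1 else a i) (k : ℤ) i) /
              ((bShift' s b (k : ℤ) (modIdx k s) - 1) *
                ∏ j ∈ Finset.Icc 1 s, bShift' s b (k : ℤ) j)))) :
    ∀ n k : ℕ, k ≤ n →
      dyckD (max r s) α ((max r s + 1) * n) ((max r s + 1) * k)
        = (n.choose k : K) *
            (∏ i ∈ Finset.Icc 1 r,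
              (ascPochhammer K (n - k)).eval (a i + (k : K))) /
            ∏ j ∈ Finset.Icc 1 s,
              (ascPochhammer K (n - k)).eval
                (b j + ((⌈(((k : ℤ) + 1 - (lam j : ℤ) : ℤ) : ℚ) / (max r s : ℚ)⌉ : ℤ) : K) +
                  (k : K)) := by
  intro n k hkn
  rcases hcase with ⟨hsr, hlam, hlam_mono, hgen, hspec⟩ |
    ⟨hrs, hlam, hsig, hsig_mono, hsig_top, hgen, hspec⟩
  · rw [max_eq_left hsr] at hm ⊢
    rw [max_eq_left (Nat.cast_le.mpr hsr)]
    exact dyckD_succ_mul_eq_of_lam hm hb hlam hlam_mono hgen hspec n k hkn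
  · rw [max_eq_right hrs] at hm ⊢
    rw [max_eq_right (Nat.cast_le.mpr hrs)]
    exact dyckD_succ_mul_eq_of_sig hm hb hlam hsig hsig_mono hsig_top hgen hspec n k hkn

/-- Explicit formula for the generalised `m`-Stieltjes–Rogers polynomials associated with
the branched-continued-fraction coefficients with `a_{r+1} := 1`:
`S^{(m)}_{n,k}(α) = D((m+1)n, (m+1)k) = C(n,k)·∏_i (a_i+k)_{n−k} / ∏_j (b_j^{(k)}+k)_{n−k}`
with `b_j^{(k)} = b_j + ⌈(k+1−λ_j)/m⌉`. -/
theorem stmt16 {K : Type*} [Field K] [CharZero K]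
    (r s : ℕ) (hm : 1 ≤ max r s)
    (lam sig : ℕ → ℕ) (a b : ℕ → K)
    (hb : ∀ j, 1 ≤ j → j ≤ s → ∀ q : ℤ, -1 ≤ q → b j + (q : K) ≠ 0)
    (α : ℕ → K)
    (hα0 : ∀ j, j < max r s → α j = 0)
    (hcase :
      (s ≤ r ∧
        (∀ j, 1 ≤ j → j ≤ s → 1 ≤ lam j ∧ lam j ≤ r) ∧
        (∀ j j', 1 ≤ j → j < j' → j' ≤ s → lam j < lam j') ∧
        (∀ k : ℕ, (∀ ℓ, 1 ≤ ℓ → ℓ ≤ s → modIdx k r ≠ lam ℓ) →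
          α (k + r) =
            (∏ i ∈ (Finset.Icc 1 (r + 1)).erase (modIdx k (r + 1)),
                aShift r (fun i => if i = r + 1 then 1 else a i) (k : ℤ) i) /
              ∏ j ∈ Finset.Icc 1 s, bShift r lam b (k : ℤ) j) ∧
        (∀ k ℓ, 1 ≤ ℓ → ℓ ≤ s → modIdx k r = lam ℓ →
          α (k + r) =
            ((bShift r lam b (k : ℤ) ℓ -
                aShift r (fun i => if i = r + 1 then 1 else a i) (k : ℤ) (modIdx k (r + 1))) *
                ∏ i ∈ (Finset.Icc 1 (r + 1)).erase (modIdx k (r + 1)),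
                  aShift r (fun i => if i = r + 1 then 1 else a i) (k : ℤ) i) /
              ((bShift r lam b (k : ℤ) ℓ - 1) *
                ∏ j ∈ Finset.Icc 1 s, bShift r lam b (k : ℤ) j))) ∨
      (r ≤ s ∧
        (∀ j, 1 ≤ j → j ≤ s → lam j = j) ∧
        (∀ i, 1 ≤ i → i ≤ r → 1 ≤ sig i ∧ sig i ≤ s) ∧
        (∀ i i', 1 ≤ i → i < i' → i' ≤ r → sig i < sig i') ∧
        sig (r + 1) = s + 1 ∧
        (∀ k : ℕ, (∀ ℓ, 1 ≤ ℓ → ℓ ≤ r + 1 → modIdx k (s + 1) ≠ sig ℓ) →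
          α (k + s) =
            -(∏ i ∈ Finset.Icc 1 (r + 1),
                aShift' s sig (fun i => if i = r + 1 then 1 else a i) (k : ℤ) i) /
              ((bShift' s b (k : ℤ) (modIdx k s) - 1) *
                ∏ j ∈ Finset.Icc 1 s, bShift' s b (k : ℤ) j)) ∧
        (∀ k ℓ, 1 ≤ ℓ → ℓ ≤ r + 1 → modIdx k (s + 1) = sig ℓ →
          α (k + s) =
            ((bShift' s b (k : ℤ) (modIdx k s) -
                aShift' s sig (fun i => if i = r + 1 then 1 else a i) (k : ℤ) ℓ) *
                ∏ i ∈ (Finset.Icc 1 (r + 1)).erase ℓ,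
                  aShift' s sig (fun i => if i = r + 1 then 1 else a i) (k : ℤ) i) /
              ((bShift' s b (k : ℤ) (modIdx k s) - 1) *
                ∏ j ∈ Finset.Icc 1 s, bShift' s b (k : ℤ) j)))) :
    ∀ n k : ℕ, k ≤ n →
      dyckD (max r s) α ((max r s + 1) * n) ((max r s + 1) * k)
        = (n.choose k : K) *
            (∏ i ∈ Finset.Icc 1 r,
              (ascPochhammer K (n - k)).eval (a i + (k : K))) /
            ∏ j ∈ Finset.Icc 1 s,
              (ascPochhammer K (n - k)).eval
                (b j + ((⌈(((k : ℤ) + 1 - (lam j : ℤ) : ℤ) : ℚ) / (max r s : ℚ)⌉ : ℤ) : K) +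
                  (k : K)) :=
  stmt16_general r s hm lam sig a b hb α hcase
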